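/- For integers d ≥ 1 and 0 ≤ k ≤ d-1, the Lebesgue volume of the slab of the unit cube {y ∈ [0,1]^d : k ≤ ∑_{i=1}^d y_i ≤ k+1} equals A(d, k+1)/d!, where A(d,p) = ∑_{i=0}^p (-1)^i (d+1 choose i) (p-i)^d is the Eulerian number. -/

import Mathlib

/-!
For `d ≥ 1`, the volume of `{y ∈ [0,1]^d : ∑ y_i ≤ t}` is the Irwin–Hall distribution function
`F_d(t) = (1/d!) ∑_{i=0}^{d} (-1)^i (d choose i) max(t - i, 0)^d`. By Fubini in the first
coordinate the volumes satisfy `V_{d+1}(t) = ∫_0^1 V_d(t - x) dx`, and `F_d` satisfies the same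
recursion, because integrating `max(t - i - x, 0)^d` over `x ∈ [0,1]` produces a first difference
in `i`, and Pascal's rule absorbs it into the coefficients `(d+1 choose i)`. The slab volume is
`F_d(k+1) - F_d(k)` (the hyperplane `∑ y_i = k` is null), and the same Pascal step turns this
difference into the alternating sum defining `A(d, k+1)`.
-/

def eulerianA (d p : ℕ) : ℤ :=
  ∑ i ∈ Finset.range (p + 1), (-1 : ℤ) ^ i * ((d + 1).choose i : ℤ) * ((p : ℤ) - (i : ℤ)) ^ d

open MeasureTheory Finset

theorem sum_neg_one_pow_choose_succ_mul_eq_sum_sub {R : Type*} [CommRing R] (n : ℕ)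
    (A : ℕ → R) :
    ∑ i ∈ range (n + 2), (-1) ^ i * ((n + 1).choose i : R) * A i
      = ∑ i ∈ range (n + 1), (-1) ^ i * (n.choose i : R) * (A i - A (i + 1)) := by
  have hshift : ∑ i ∈ range (n + 1), (-1) ^ (i + 1) * (n.choose (i + 1) : R) * A (i + 1) + A 0
      = ∑ i ∈ range (n + 1), (-1) ^ i * (n.choose i : R) * A i := by
    have h := sum_range_succ' (fun i => (-1) ^ i * (n.choose i : R) * A i) (n + 1)
    rw [sum_range_succ, Nat.choose_succ_self] at h
    simpa using h.symm
  have hpascal (i : ℕ) : (-1) ^ (i + 1) * ((n + 1).choose (i + 1) : R) * A (i + 1)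
      = -((-1) ^ i * n.choose i * A (i + 1)) + (-1) ^ (i + 1) * n.choose (i + 1) * A (i + 1) := by
    rw [Nat.choose_succ_succ']
    push_cast
    ring
  rw [sum_range_succ', sum_congr rfl fun i _ => hpascal i, sum_add_distrib, sum_neg_distrib]
  simp only [pow_zero, Nat.choose_zero_right, Nat.cast_one, mul_one, one_mul, mul_sub,
    sum_sub_distrib, add_assoc, hshift]
  ring

theorem sum_range_mul_max_sub_pow_of_le (n m e : ℕ) (hm : m ≤ n) (c : ℕ → ℝ) :
    ∑ i ∈ range (n + 1), c i * max ((m : ℝ) - i) 0 ^ (e + 1)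
      = ∑ i ∈ range (m + 1), c i * ((m : ℝ) - i) ^ (e + 1) := by
  refine (sum_subset (range_subset_range.2 (by omega)) fun i _ hi => ?_).symm.trans
    (sum_congr rfl fun i hi => ?_)
  · have : (m : ℝ) - i ≤ 0 := by
      rw [mem_range, not_lt] at hi
      simp only [sub_nonpos, Nat.cast_le]
      omega
    rw [max_eq_right this, zero_pow (Nat.succ_ne_zero e), mul_zero]
  · have : (i : ℝ) ≤ m := by exact_mod_cast Nat.lt_succ_iff.1 (mem_range.1 hi)
    rw [max_eq_left (by linarith)]

theorem integral_zero_max_pow (n : ℕ) (b : ℝ) :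
    ∫ u in (0 : ℝ)..b, max u 0 ^ (n + 1) = max b 0 ^ (n + 2) / (n + 2) := by
  rcases le_total 0 b with hb | hb
  · have hcongr : Set.EqOn (fun u : ℝ => max u 0 ^ (n + 1)) (fun u => u ^ (n + 1))
        (Set.uIcc 0 b) := fun u hu => by
      rw [Set.uIcc_of_le hb] at hu
      simp [max_eq_left hu.1]
    rw [intervalIntegral.integral_congr hcongr, integral_pow, max_eq_left hb]
    push_cast
    ring
  · have hcongr : Set.EqOn (fun u : ℝ => max u 0 ^ (n + 1)) 0 (Set.uIcc 0 b) := fun u hu => by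
      rw [Set.uIcc_of_ge hb] at hu
      simp [max_eq_right hu.2]
    rw [intervalIntegral.integral_congr hcongr, max_eq_right hb]
    simp

theorem integral_unitInterval_max_sub_pow (n : ℕ) (c : ℝ) :
    ∫ x in (0 : ℝ)..1, max (c - x) 0 ^ (n + 1)
      = (max c 0 ^ (n + 2) - max (c - 1) 0 ^ (n + 2)) / (n + 2) := by
  have hint (a b : ℝ) : IntervalIntegrable (fun u : ℝ => max u 0 ^ (n + 1)) volume a b :=
    (by fun_prop : Continuous fun u : ℝ => max u 0 ^ (n + 1)).intervalIntegrable a b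
  rw [intervalIntegral.integral_comp_sub_left (fun u => max u 0 ^ (n + 1)), sub_zero,
    ← intervalIntegral.integral_interval_sub_left (hint 0 c) (hint 0 (c - 1)),
    integral_zero_max_pow, integral_zero_max_pow, sub_div]

/-- The distribution function of the sum of `d` independent uniform variables on `[0, 1]`, for
`d ≥ 1`; at `d = 0` it is constantly `1`, since `0 ^ 0 = 1`. -/
noncomputable def irwinHallCDF (d : ℕ) (t : ℝ) : ℝ :=
  (∑ i ∈ range (d + 1), (-1) ^ i * (d.choose i : ℝ) * max (t - i) 0 ^ d) / d.factorial

theorem continuous_irwinHallCDF (d : ℕ) : Continuous (irwinHallCDF d) := by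
  unfold irwinHallCDF
  fun_prop

theorem irwinHallCDF_one (t : ℝ) : irwinHallCDF 1 t = max t 0 - max (t - 1) 0 := by
  simp [irwinHallCDF, sum_range_succ, sub_eq_add_neg]

theorem integral_irwinHallCDF_sub (d : ℕ) (t : ℝ) :
    ∫ x in (0 : ℝ)..1, irwinHallCDF (d + 1) (t - x) = irwinHallCDF (d + 2) t := by
  have hterm (i : ℕ) :
      ∫ x in (0 : ℝ)..1, (-1) ^ i * ((d + 1).choose i : ℝ) * max (t - x - i) 0 ^ (d + 1)
        = (-1) ^ i * ((d + 1).choose i : ℝ) *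
            (max (t - i) 0 ^ (d + 2) - max (t - ↑(i + 1)) 0 ^ (d + 2)) / (d + 2) := by
    simp only [intervalIntegral.integral_const_mul, sub_right_comm t _ (i : ℝ),
      integral_unitInterval_max_sub_pow, Nat.cast_succ, ← sub_sub]
    ring
  unfold irwinHallCDF
  rw [intervalIntegral.integral_div, intervalIntegral.integral_finsetSum
      fun i _ => (by fun_prop : Continuous _).intervalIntegrable 0 1]
  simp only [hterm, ← sum_div, ← sum_neg_one_pow_choose_succ_mul_eq_sum_sub (d + 1)
    (fun i => max (t - i) 0 ^ (d + 2)), Nat.factorial_succ (d + 1)]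
  push_cast
  field_simp
  ring

theorem irwinHallCDF_nonneg (d : ℕ) (t : ℝ) : 0 ≤ irwinHallCDF (d + 1) t := by
  induction d generalizing t with
  | zero =>
    rw [irwinHallCDF_one, sub_nonneg]
    exact max_le_max (by linarith) le_rfl
  | succ d ih =>
    rw [← integral_irwinHallCDF_sub]
    exact intervalIntegral.integral_nonneg zero_le_one fun x _ => ih (t - x)

theorem irwinHallCDF_succ_sub_eq_eulerianA (n k : ℕ) (hk : k ≤ n) :
    irwinHallCDF (n + 1) (k + 1) - irwinHallCDF (n + 1) k
      = eulerianA (n + 1) (k + 1) / (n + 1).factorial := by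
  have htrunc : (eulerianA (n + 1) (k + 1) : ℝ)
      = ∑ i ∈ range (n + 3),
          (-1) ^ i * ((n + 2).choose i : ℝ) * max ((k + 1 : ℕ) - (i : ℝ)) 0 ^ (n + 1) := by
    rw [sum_range_mul_max_sub_pow_of_le (n + 2) (k + 1) n (by omega), eulerianA]
    push_cast
    rfl
  rw [htrunc, sum_neg_one_pow_choose_succ_mul_eq_sum_sub, irwinHallCDF, irwinHallCDF,
    div_sub_div_same, ← sum_sub_distrib]
  congr 1
  refine sum_congr rfl fun i _ => ?_
  push_cast
  rw [show (k : ℝ) + 1 - (i + 1) = k - i by ring]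
  ring

def cubeSublevel (d : ℕ) (t : ℝ) : Set (Fin d → ℝ) :=
  {y | (∀ i, y i ∈ Set.Icc (0 : ℝ) 1) ∧ ∑ i, y i ≤ t}

theorem measurableSet_cubeSublevel (d : ℕ) (t : ℝ) : MeasurableSet (cubeSublevel d t) := by
  unfold cubeSublevel
  measurability

theorem cubeSublevel_mono (d : ℕ) {s t : ℝ} (hst : s ≤ t) : cubeSublevel d s ⊆ cubeSublevel d t :=
  fun _ hy => ⟨hy.1, hy.2.trans hst⟩

theorem volume_cubeSublevel_one (t : ℝ) :
    volume (cubeSublevel 1 t) = ENNReal.ofReal (irwinHallCDF 1 t) := by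
  have hpre : cubeSublevel 1 t = Set.Icc 0 fun _ => min 1 t := by
    ext y
    simp [cubeSublevel, Pi.le_def, Fin.forall_fin_one, and_assoc]
  have hcdf : irwinHallCDF 1 t = max (min 1 t) 0 := by
    rw [irwinHallCDF_one]
    grind
  rw [hpre, Real.volume_Icc_pi, Fin.prod_univ_one, hcdf, Pi.zero_apply, sub_zero,
    ENNReal.ofReal_max]
  simp

theorem volume_cubeSublevel_succ (d : ℕ) (t : ℝ) :
    volume (cubeSublevel (d + 1) t) = ∫⁻ x in Set.Icc 0 1, volume (cubeSublevel d (t - x)) := by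
  let T : Set (ℝ × (Fin d → ℝ)) := {p | p.1 ∈ Set.Icc 0 1 ∧ p.2 ∈ cubeSublevel d (t - p.1)}
  have hT : MeasurableSet T := by
    simp only [T, cubeSublevel]
    measurability
  have hpre : cubeSublevel (d + 1) t = MeasurableEquiv.piFinSuccAbove (fun _ => ℝ) 0 ⁻¹' T := by
    ext y
    simp [T, cubeSublevel, Fin.forall_fin_succ, Fin.sum_univ_succ, Fin.tail, le_sub_iff_add_le',
      and_assoc]
  have hslice (x : ℝ) : volume (Prod.mk x ⁻¹' T)
      = (Set.Icc 0 1).indicator (fun x => volume (cubeSublevel d (t - x))) x := by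
    by_cases hx : x ∈ Set.Icc (0 : ℝ) 1
    · rw [Set.indicator_of_mem hx]
      simp only [T, Set.preimage_ofPred_eq, hx, true_and, Set.ofPred_mem_eq]
    · rw [Set.indicator_of_notMem hx]
      simp only [T, Set.preimage_ofPred_eq, hx, false_and, Set.ofPred_false, measure_empty]
  rw [hpre, (volume_preserving_piFinSuccAbove (fun _ => ℝ) 0).measure_preimage
      hT.nullMeasurableSet, Measure.volume_eq_prod, Measure.prod_apply hT,
    ← lintegral_indicator measurableSet_Icc]
  simp only [hslice]

theorem volume_cubeSublevel (d : ℕ) (t : ℝ) :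
    volume (cubeSublevel (d + 1) t) = ENNReal.ofReal (irwinHallCDF (d + 1) t) := by
  induction d generalizing t with
  | zero => exact volume_cubeSublevel_one t
  | succ d ih =>
    have hcont : Continuous fun x => irwinHallCDF (d + 1) (t - x) :=
      (continuous_irwinHallCDF _).comp (by fun_prop)
    rw [volume_cubeSublevel_succ, setLIntegral_congr_fun measurableSet_Icc fun x _ => ih (t - x),
      ← ofReal_integral_eq_lintegral_ofReal hcont.integrableOn_Icc
        (ae_of_all _ fun x => irwinHallCDF_nonneg d (t - x)),
      integral_Icc_eq_integral_Ioc, ← intervalIntegral.integral_of_le zero_le_one,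
      integral_irwinHallCDF_sub]

theorem addHaar_preimage_singleton_eq_zero {E : Type*} [NormedAddCommGroup E] [NormedSpace ℝ E]
    [MeasurableSpace E] [BorelSpace E] [FiniteDimensional ℝ E] (μ : Measure E)
    [μ.IsAddHaarMeasure] {L : E →ₗ[ℝ] ℝ} (hL : L ≠ 0) (c : ℝ) : μ (L ⁻¹' {c}) = 0 := by
  obtain ⟨y₀, rfl⟩ := LinearMap.surjective_of_ne_zero hL c
  have htranslate : L ⁻¹' {L y₀} = (· + -y₀) ⁻¹' (LinearMap.ker L) := by
    ext y
    simp [← sub_eq_add_neg, sub_eq_zero]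
  rw [htranslate, measure_preimage_add_right]
  exact Measure.addHaar_submodule μ _ (by rwa [Ne, LinearMap.ker_eq_top])

theorem volume_setOf_sum_eq {ι : Type*} [Fintype ι] [Nonempty ι] (c : ℝ) :
    volume {y : ι → ℝ | ∑ i, y i = c} = 0 := by
  let L : (ι → ℝ) →ₗ[ℝ] ℝ := ∑ i, LinearMap.proj i
  have hL : L ≠ 0 := fun h => by
    simpa [L] using LinearMap.congr_fun h (fun _ => 1)
  have hset : {y : ι → ℝ | ∑ i, y i = c} = L ⁻¹' {c} := by
    ext y
    simp [L]
  rw [hset]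
  exact addHaar_preimage_singleton_eq_zero volume hL c

theorem setOf_cube_sum_mem_Icc_ae_eq_diff (d : ℕ) (s t : ℝ) :
    {y : Fin (d + 1) → ℝ | (∀ i, y i ∈ Set.Icc (0 : ℝ) 1) ∧ s ≤ ∑ i, y i ∧ ∑ i, y i ≤ t}
      =ᵐ[volume] (cubeSublevel (d + 1) t \ cubeSublevel (d + 1) s : Set (Fin (d + 1) → ℝ)) := by
  refine ae_eq_set.2
    ⟨measure_mono_null ?_ (volume_setOf_sum_eq s), measure_mono_null ?_ measure_empty⟩
  · rintro y ⟨⟨hcube, hs, ht⟩, hy⟩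
    have hle : ∑ i, y i ≤ s := by
      by_contra h
      exact hy ⟨⟨hcube, ht⟩, fun h' => h h'.2⟩
    exact le_antisymm hle hs
  · rintro y ⟨⟨⟨hcube, ht⟩, hs⟩, hy⟩
    exact hy ⟨hcube, le_of_not_ge fun h => hs ⟨hcube, h⟩, ht⟩

/-- The volume of the hypersimplex slab `{y ∈ [0,1]^d : k ≤ ∑ y_i ≤ k+1}`
equals `A(d, k+1)/d!`. -/
theorem stmt_4 (d k : ℕ) (hd : 1 ≤ d) (hk : k ≤ d - 1) :
    MeasureTheory.volume
        {y : Fin d → ℝ | (∀ i, y i ∈ Set.Icc (0 : ℝ) 1) ∧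
          (k : ℝ) ≤ ∑ i, y i ∧ ∑ i, y i ≤ (k : ℝ) + 1}
      = ENNReal.ofReal ((eulerianA d (k + 1) : ℝ) / (d.factorial : ℝ)) := by
  obtain ⟨n, rfl⟩ : ∃ n, d = n + 1 := ⟨d - 1, by omega⟩
  rw [measure_congr (setOf_cube_sum_mem_Icc_ae_eq_diff n k (k + 1)),
    measure_sdiff (cubeSublevel_mono _ (by linarith))
      (measurableSet_cubeSublevel _ _).nullMeasurableSet
      (by rw [volume_cubeSublevel]; exact ENNReal.ofReal_ne_top),
    volume_cubeSublevel, volume_cubeSublevel, ← ENNReal.ofReal_sub _ (irwinHallCDF_nonneg _ _),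
    irwinHallCDF_succ_sub_eq_eulerianA n k (by omega)]
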